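/- The map a ↦ (0, √3 r_1 ‖a‖/(√N a_1), 0, √3 r_2 ‖a‖/(√N a_2), …, 0, √3 r_N ‖a‖/(√N a_N)) from ℝ_{>0}^N to ℝ^{2N} is smooth, and composing with the pairing map Q_{N,0} that sends 2N-tuples of reals to multisets of intervals recovers the one-dimensional EMPH barcode of the Liouville torus; hence this barcode-valued map is smooth in the diffeological sense. -/

import Mathlib

/-- The map `a ↦ ((b_1(a), d_1(a)), …, (b_N(a), d_N(a)))` with `b_L(a) = 0` and
`d_L(a) = √3 r_L ‖a‖/(√N a_L)`, encoding the one-dimensional EMPH barcode of the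
Liouville torus, is smooth (C^∞) on the positive orthant `ℝ_{>0}^N`. -/
theorem stmt_18 (N : ℕ) (hN : 1 ≤ N) (r : Fin N → ℝ) (hr : ∀ i, 0 < r i) :
    ContDiffOn ℝ (⊤ : ℕ∞)
      (fun a : EuclideanSpace ℝ (Fin N) =>
        fun L : Fin N =>
          ((0 : ℝ), Real.sqrt 3 * r L * ‖a‖ / (Real.sqrt N * a L)))
      {a : EuclideanSpace ℝ (Fin N) | ∀ i, 0 < a i} := by
  have hnorm : ContDiffOn ℝ (⊤ : ℕ∞) (fun a : EuclideanSpace ℝ (Fin N) => ‖a‖)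
      {a : EuclideanSpace ℝ (Fin N) | ∀ i, 0 < a i} := by
    intro x hx
    have hx0 : x ≠ 0 := by
      intro h
      have := hx ⟨0, hN⟩
      rw [h] at this
      exact lt_irrefl _ this
    exact (contDiffAt_norm ℝ hx0).contDiffWithinAt
  apply contDiffOn_pi.2
  intro L
  apply ContDiffOn.prodMk contDiffOn_const
  apply ContDiffOn.div
  · exact contDiffOn_const.mul hnorm
  · have hproj : ContDiffOn ℝ (⊤ : ℕ∞) (fun a : EuclideanSpace ℝ (Fin N) => a L)
        {a : EuclideanSpace ℝ (Fin N) | ∀ i, 0 < a i} :=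
      (EuclideanSpace.proj (𝕜 := ℝ) L).contDiff.contDiffOn
    exact contDiffOn_const.mul hproj
  · intro x hx
    have h1 : (0:ℝ) < Real.sqrt N := Real.sqrt_pos.2 (by exact_mod_cast Nat.lt_of_lt_of_le Nat.zero_lt_one hN)
    exact ne_of_gt (mul_pos h1 (hx L))
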